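/- arXiv:2603.24737 — 2 statements merged into one kernel-verified Lean document; each statement's English description precedes it below -/
import Mathlib

section
/- Let K₁ > 0 and ε ∈ (0,1), and let (aₘ)_{m∈ℕ₀} be a sequence of nonnegative real numbers satisfying aₘ₊₁ ≤ aₘ + K₁(1 + aₘ^{1−ε}) for all m ∈ ℕ₀. Then for every d > 1/ε there exists a constant K₂ > 0, depending only on K₁ and d, such that aₘ₊₁ ≤ K₂ (1+m)^d (1 + a₀) for all m ∈ ℕ₀. -/
/-!
By induction, `a n ≤ u (1 + n) ^ d` with `u = B (1 + a 0)`. For `y = u (1 + n) ^ d ≥ 1` the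
increment `K (1 + y ^ (1 - ε))` is at most `2 K y ^ (1 - 1/d)`, which is at most
`d u (1 + n) ^ (d - 1)` as soon as `u ≥ (2K/d) ^ d`; Bernoulli's inequality
`x ^ d + d x ^ (d - 1) ≤ (x + 1) ^ d` then closes the induction.
-/

open Real

theorem Real.rpow_add_mul_rpow_sub_one_le {x d : ℝ} (hx : 0 < x) (hd : 1 ≤ d) :
    x ^ d + d * x ^ (d - 1) ≤ (x + 1) ^ d := by
  have bernoulli : 1 + d * x⁻¹ ≤ (1 + x⁻¹) ^ d :=
    one_add_mul_self_le_rpow_one_add (by linarith [inv_pos.2 hx]) hd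
  calc x ^ d + d * x ^ (d - 1) = x ^ d * (1 + d * x⁻¹) := by
        rw [rpow_sub_one hx.ne']; field_simp
    _ ≤ x ^ d * (1 + x⁻¹) ^ d := by gcongr
    _ = (x + 1) ^ d := by
        rw [← mul_rpow hx.le (by positivity)]; congr 1; field_simp

theorem mul_rpow_add_mul_rpow_le {u x c d : ℝ} (hu : 0 < u) (hx : 0 < x) (hd : 1 ≤ d)
    (hc : (c / d) ^ d ≤ u) :
    u * x ^ d + c * (u * x ^ d) ^ (1 - d⁻¹) ≤ u * (x + 1) ^ d := by
  have hd0 : 0 < d := by linarith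
  have hcu : c ≤ d * u ^ d⁻¹ := by
    rcases le_or_gt c 0 with hc0 | hc0
    · have := rpow_nonneg hu.le d⁻¹
      nlinarith
    · rw [← div_le_iff₀' hd0, le_rpow_inv_iff_of_pos (by positivity) hu.le hd0]
      exact hc
  have hpow : (u * x ^ d) ^ (1 - d⁻¹) = u ^ (1 - d⁻¹) * x ^ (d - 1) := by
    rw [mul_rpow hu.le (by positivity), ← rpow_mul hx.le, mul_sub, mul_one,
      mul_inv_cancel₀ hd0.ne']
  have hscale : c * u ^ (1 - d⁻¹) ≤ d * u := by
    calc c * u ^ (1 - d⁻¹) ≤ d * u ^ d⁻¹ * u ^ (1 - d⁻¹) := by gcongr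
      _ = d * u := by rw [mul_assoc, ← rpow_add hu]; simp
  calc u * x ^ d + c * (u * x ^ d) ^ (1 - d⁻¹)
      = u * x ^ d + c * u ^ (1 - d⁻¹) * x ^ (d - 1) := by rw [hpow]; ring
    _ ≤ u * x ^ d + d * u * x ^ (d - 1) := by gcongr
    _ = u * (x ^ d + d * x ^ (d - 1)) := by ring
    _ ≤ u * (x + 1) ^ d := by gcongr; exact rpow_add_mul_rpow_sub_one_le hx hd

theorem add_mul_one_add_rpow_le {a y K θ η : ℝ} (ha : 0 ≤ a) (hay : a ≤ y) (hy : 1 ≤ y)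
    (hK : 0 ≤ K) (hη : 0 ≤ η) (hηθ : η ≤ θ) :
    a + K * (1 + a ^ η) ≤ y + 2 * K * y ^ θ := by
  have hone : 1 ≤ y ^ θ := one_le_rpow hy (hη.trans hηθ)
  have hpow : a ^ η ≤ y ^ θ :=
    (rpow_le_rpow ha hay hη).trans (rpow_le_rpow_of_exponent_le hy hηθ)
  nlinarith

theorem le_mul_one_add_rpow_of_le_add_mul_one_add_rpow {a : ℕ → ℝ} {K ε d u : ℝ}
    (ha : ∀ m, 0 ≤ a m) (hK : 0 ≤ K) (hd : 1 ≤ d) (hdε : d⁻¹ ≤ ε) (hε : ε ≤ 1)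
    (hu : 1 ≤ u) (hKu : (2 * K / d) ^ d ≤ u) (ha₀ : a 0 ≤ u)
    (hrec : ∀ m, a (m + 1) ≤ a m + K * (1 + a m ^ (1 - ε))) (n : ℕ) :
    a n ≤ u * (1 + n) ^ d := by
  induction n with
  | zero => simpa using ha₀
  | succ n ih =>
    have hx : (1 : ℝ) ≤ 1 + n := by simp
    have hy : 1 ≤ u * (1 + n) ^ d :=
      one_le_mul_of_one_le_of_one_le hu (one_le_rpow hx (by linarith))
    calc a (n + 1) ≤ a n + K * (1 + a n ^ (1 - ε)) := hrec n
      _ ≤ u * (1 + n) ^ d + 2 * K * (u * (1 + n) ^ d) ^ (1 - d⁻¹) :=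
        add_mul_one_add_rpow_le (ha n) ih hy hK (by linarith) (by linarith)
      _ ≤ u * (1 + n + 1) ^ d := mul_rpow_add_mul_rpow_le (by linarith) (by linarith) hd hKu
      _ = u * (1 + ↑(n + 1)) ^ d := by push_cast; ring_nf

/-- Grönwall-type iteration lemma (Lemma 5.1): if a nonnegative sequence satisfies
`a (m+1) ≤ a m + K₁ (1 + (a m)^(1-ε))`, then for every `d > 1/ε` there is a constant
`K₂ = K₂(K₁, d)` with `a (m+1) ≤ K₂ (1+m)^d (1 + a 0)` for all `m`. -/
theorem gronwall_iteration (K₁ : ℝ) (hK₁ : 0 < K₁) (d : ℝ) :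
    ∃ K₂ : ℝ, 0 < K₂ ∧
      ∀ ε : ℝ, ε ∈ Set.Ioo (0:ℝ) 1 → 1/ε < d →
      ∀ a : ℕ → ℝ, (∀ m : ℕ, 0 ≤ a m) →
        (∀ m : ℕ, a (m+1) ≤ a m + K₁ * (1 + a m ^ (1 - ε))) →
        ∀ m : ℕ, a (m+1) ≤ K₂ * (1 + (m:ℝ)) ^ d * (1 + a 0) := by
  set B := max 1 ((2 * K₁ / d) ^ d)
  refine ⟨2 ^ d * B, by positivity, fun ε ⟨hε₀, hε₁⟩ hεd a ha hrec m => ?_⟩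
  have hd : 1 < d := by
    calc 1 < 1 / ε := by rw [lt_div_iff₀ hε₀]; linarith
      _ < d := hεd
  have hdε : d⁻¹ ≤ ε := by
    rw [inv_le_comm₀ (by linarith) hε₀, ← one_div]; exact hεd.le
  have hB : 1 ≤ B := le_max_left _ _
  have hX : 1 ≤ 1 + a 0 := by linarith [ha 0]
  have hbound := le_mul_one_add_rpow_of_le_add_mul_one_add_rpow (u := B * (1 + a 0)) ha
    hK₁.le hd.le hdε hε₁.le (one_le_mul_of_one_le_of_one_le hB hX)
    ((le_max_right _ _).trans (le_mul_of_one_le_right (by linarith) hX))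
    (le_mul_of_one_le_left (ha 0) hB |>.trans (by linarith)) hrec (m + 1)
  have hdouble : (1 + ((m + 1 : ℕ) : ℝ)) ^ d ≤ 2 ^ d * (1 + m) ^ d := by
    rw [← mul_rpow (by norm_num) (by positivity)]
    gcongr
    push_cast; linarith
  calc a (m + 1) ≤ B * (1 + a 0) * (1 + ((m + 1 : ℕ) : ℝ)) ^ d := hbound
    _ ≤ B * (1 + a 0) * (2 ^ d * (1 + m) ^ d) := by gcongr
    _ = 2 ^ d * B * (1 + m) ^ d * (1 + a 0) := by ring
end

section
/- Let k ∈ ℕ (k ≥ 1) and 0 ≤ s < 1. There exists a constant C > 0, depending only on s, such that for every λ ∈ [1,∞), every N ≥ 1, every admissible I_N-multiplier m of order s, and every measurable F₀ : ℝ×ℤ → ℂ the following two inequalities hold: (i) (1/λ) ∫_ℝ ∑_{n∈ℤ} m(ξ, n/λ)² · λ^{2(2−2/k)} |F₀(λξ, n)|² dξ ≤ C λ^{2−4/k} ∫_ℝ ∑_{n∈ℤ} |F₀(ξ,n)|² dξ; (ii) (1/λ) ∫_ℝ ∑_{n∈ℤ} m(ξ, n/λ)² (ξ² + (n/λ)²)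 · λ^{2(2−2/k)} |F₀(λξ, n)|² dξ ≤ C N^{2−2s} λ^{2−4/k−2s} ∫_ℝ ∑_{n∈ℤ} (ξ² + n²)^{s} |F₀(ξ,n)|² dξ. (These are the estimates (4.1) and (4.2) of Lemma 4.1: for u_{0,λ}(x,y) := λ^{−2/k} u₀(x/λ, y/λ) one has ‖I_N u_{0,λ}‖_{L²(ℝ×T_λ)} ≲ λ^{1−2/k} ‖u₀‖_{L²(ℝ×T)} and ‖∇ I_N u_{0,λ}‖_{L²(ℝ×T_λ)} ≲ N^{1−s} λ^{1−2/k−s} ‖u₀‖_{H^s(ℝ×T)}, written on the Fourier side via the scaling identity 𝓕^λ u_{0,λ}(ξ, n/λ) = λ^{2−2/k} 𝓕 u₀(λξ, n) with F₀ = 𝓕u₀.) -/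
open MeasureTheory Set
open scoped ENNReal

noncomputable section

/-- Euclidean norm on `ℝ²`. -/
def nrm2 (z : ℝ × ℝ) : ℝ := Real.sqrt (z.1 ^ 2 + z.2 ^ 2)

/-- An admissible `I_N`-multiplier of order `s`: a smooth, positive, radially
nonincreasing function equal to `1` for `|z| ≤ N` and to `(|z|/N)^{s−1}` for `|z| ≥ 2N`. -/
def AdmissibleMultiplier (N s : ℝ) (m : ℝ × ℝ → ℝ) : Prop :=
  ContDiff ℝ (⊤ : ℕ∞) m ∧ (∀ z, 0 < m z) ∧
  (∃ m₀ : ℝ → ℝ, (∀ z, m z = m₀ (nrm2 z)) ∧ AntitoneOn m₀ (Set.Ici 0)) ∧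
  (∀ z, nrm2 z ≤ N → m z = 1) ∧
  (∀ z, 2*N ≤ nrm2 z → m z = (nrm2 z / N) ^ (s - 1))

lemma nrm2_nonneg (z : ℝ × ℝ) : 0 ≤ nrm2 z := Real.sqrt_nonneg _

lemma nrm2_sq (z : ℝ × ℝ) : nrm2 z ^ 2 = z.1 ^ 2 + z.2 ^ 2 :=
  Real.sq_sqrt (by positivity)

lemma m_le_one {N s : ℝ} (hN : 0 ≤ N) {m : ℝ × ℝ → ℝ}
    (hm : AdmissibleMultiplier N s m) (z : ℝ × ℝ) : m z ≤ 1 := by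
  obtain ⟨-, hpos, ⟨m₀, hm₀, hanti⟩, h1, -⟩ := hm
  rcases le_or_gt (nrm2 z) N with h | h
  · exact (h1 z h).le
  · have hNz : nrm2 (N, 0) = N := by
      simp [nrm2, Real.sqrt_sq hN]
    have : m₀ (nrm2 z) ≤ m₀ N := by
      refine hanti (by exact hN) (le_trans hN h.le) h.le
    calc m z = m₀ (nrm2 z) := hm₀ z
      _ ≤ m₀ N := this
      _ = m (N, 0) := by rw [hm₀ (N, 0), hNz]
      _ = 1 := h1 _ (le_of_eq hNz)

lemma key_ptwise {N s : ℝ} (hs0 : 0 ≤ s) (hs1 : s < 1) (hN : 1 ≤ N) {m : ℝ × ℝ → ℝ}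
    (hm : AdmissibleMultiplier N s m) (z : ℝ × ℝ) :
    m z ^ 2 * (z.1 ^ 2 + z.2 ^ 2) ≤ 4 * N ^ (2 - 2*s) * (z.1 ^ 2 + z.2 ^ 2) ^ s := by
  have hN0 : (0:ℝ) < N := lt_of_lt_of_le one_pos hN
  set r := nrm2 z with hr
  have hr0 : 0 ≤ r := nrm2_nonneg z
  have hQ : z.1 ^ 2 + z.2 ^ 2 = r ^ 2 := (nrm2_sq z).symm
  rw [hQ]
  rcases le_or_gt r (2*N) with h | h
  · -- small case
    have hm1 : m z ≤ 1 := m_le_one hN0.le hm z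
    have hm0 : 0 ≤ m z := (hm.2.1 z).le
    have h1 : m z ^ 2 * r ^ 2 ≤ r ^ 2 := by
      nlinarith [sq_nonneg r, mul_le_mul hm1 hm1 hm0 zero_le_one]
    refine h1.trans ?_
    rcases eq_or_lt_of_le hr0 with h0 | h0
    · simp [← h0]
      positivity
    · have hrp : (0:ℝ) < r ^ 2 := by positivity
      have e1 : (r ^ 2 : ℝ) = (r^2) ^ s * (r^2) ^ (1 - s) := by
        rw [← Real.rpow_add hrp]; simp
      have e2 : (r^2:ℝ) ^ (1-s) ≤ ((2*N)^2) ^ (1-s) := by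
        apply Real.rpow_le_rpow hrp.le (by nlinarith) (by linarith)
      have e3 : (((2*N):ℝ)^2) ^ (1-s) = (2*N) ^ (2 - 2*s) := by
        rw [← Real.rpow_natCast (2*N) 2, ← Real.rpow_mul (by positivity)]
        norm_num; ring_nf
      have e4 : ((2*N):ℝ) ^ (2-2*s) = 2 ^ (2-2*s) * N ^ (2-2*s) :=
        Real.mul_rpow (by norm_num) hN0.le
      have e5 : (2:ℝ) ^ (2-2*s) ≤ 4 := by
        calc (2:ℝ) ^ (2-2*s) ≤ 2 ^ (2:ℝ) :=
          Real.rpow_le_rpow_of_exponent_le one_le_two (by linarith)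
        _ = 4 := by norm_num [Real.rpow_natCast 2 2]
      have : (r^2:ℝ) ^ (1-s) ≤ 4 * N ^ (2-2*s) := by
        refine e2.trans ?_
        rw [e3, e4]
        have : (0:ℝ) ≤ N ^ (2-2*s) := by positivity
        nlinarith
      have hrs : (0:ℝ) ≤ (r^2) ^ s := by positivity
      calc (r^2:ℝ) = (r^2)^s * (r^2)^(1-s) := e1
        _ ≤ (r^2)^s * (4 * N ^ (2-2*s)) := mul_le_mul_of_nonneg_left this hrs
        _ = 4 * N ^ (2-2*s) * (r^2)^s := by ring
  · -- large case
    have hm2 : m z = (r / N) ^ (s - 1) := hm.2.2.2.2 z (by exact h.le)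
    have hrpos : (0:ℝ) < r := by nlinarith
    have hdiv : (0:ℝ) < r / N := by positivity
    have er : (r:ℝ) ^ 2 = r ^ (2:ℝ) := by
      rw [← Real.rpow_natCast r 2]; norm_num
    have e1 : m z ^ 2 * r ^ 2 = (r/N) ^ (2*s - 2) * r ^ (2:ℝ) := by
      rw [hm2, sq ((r/N) ^ (s-1)), ← Real.rpow_add hdiv, er]
      ring_nf
    have e2 : ((r/N):ℝ) ^ (2*s-2) = r ^ (2*s-2) * N ^ (2-2*s) := by
      rw [Real.div_rpow hrpos.le hN0.le, div_eq_mul_inv, ← Real.rpow_neg hN0.le]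
      ring_nf
    have e3 : r ^ (2*s-2) * r ^ (2:ℝ) = r ^ (2*s) := by
      rw [← Real.rpow_add hrpos]; ring_nf
    have e4 : (r^2:ℝ) ^ s = r ^ (2*s) := by
      rw [← Real.rpow_natCast r 2, ← Real.rpow_mul hrpos.le]; norm_num
    have hpos : (0:ℝ) ≤ N ^ (2-2*s) * r ^ (2*s) := by positivity
    calc m z ^ 2 * r ^ 2 = N ^ (2-2*s) * r ^ (2*s) := by
          rw [e1, e2]; rw [mul_comm (r ^ (2*s-2)) (N ^ (2-2*s)), mul_assoc, e3]
      _ ≤ 4 * N ^ (2-2*s) * (r^2) ^ s := by rw [e4]; nlinarith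

lemma lintegral_scale {lam : ℝ} (hl : 0 < lam) {G : ℝ → ℝ≥0∞} (hG : Measurable G) :
    ∫⁻ ξ : ℝ, G (lam * ξ) = ENNReal.ofReal (1/lam) * ∫⁻ x, G x := by
  rw [← lintegral_map hG (measurable_const_mul lam), Real.map_volume_mul_left hl.ne',
    lintegral_smul_measure, abs_of_pos (inv_pos.2 hl), one_div, smul_eq_mul]

/-- Lemma 4.1, on the Fourier side via the scaling identity
`𝓕^λ u_{0,λ}(ξ, n/λ) = λ^{2−2/k} 𝓕u₀(λξ, n)` with `F₀ = 𝓕u₀`: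
(i) `‖I_N u_{0,λ}‖_{L²(ℝ×T_λ)} ≲ λ^{1−2/k} ‖u₀‖_{L²(ℝ×T)}` and
(ii) `‖∇ I_N u_{0,λ}‖_{L²(ℝ×T_λ)} ≲ N^{1−s} λ^{1−2/k−s} ‖u₀‖_{H^s(ℝ×T)}`. -/
theorem rescaled_IN_bounds (k : ℕ) (hk : 1 ≤ k) (s : ℝ) (hs0 : 0 ≤ s) (hs1 : s < 1) :
    ∃ C : ℝ, 0 < C ∧ ∀ lam : ℝ, 1 ≤ lam → ∀ N : ℝ, 1 ≤ N →
      ∀ m : ℝ × ℝ → ℝ, AdmissibleMultiplier N s m →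
      ∀ F₀ : ℝ × ℤ → ℂ, Measurable F₀ →
      (ENNReal.ofReal (1/lam) * ∫⁻ ξ : ℝ, ∑' n : ℤ,
          ENNReal.ofReal (m (ξ, (n:ℝ)/lam) ^ 2 * lam ^ (2*(2 - 2/(k:ℝ))))
            * (‖F₀ (lam*ξ, n)‖₊ : ℝ≥0∞) ^ 2)
        ≤ ENNReal.ofReal (C * lam ^ (2 - 4/(k:ℝ)))
            * ∫⁻ ξ : ℝ, ∑' n : ℤ, (‖F₀ (ξ, n)‖₊ : ℝ≥0∞) ^ 2
      ∧
      (ENNReal.ofReal (1/lam) * ∫⁻ ξ : ℝ, ∑' n : ℤ,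
          ENNReal.ofReal (m (ξ, (n:ℝ)/lam) ^ 2 * (ξ^2 + ((n:ℝ)/lam)^2)
              * lam ^ (2*(2 - 2/(k:ℝ))))
            * (‖F₀ (lam*ξ, n)‖₊ : ℝ≥0∞) ^ 2)
        ≤ ENNReal.ofReal (C * N ^ (2 - 2*s) * lam ^ (2 - 4/(k:ℝ) - 2*s))
            * ∫⁻ ξ : ℝ, ∑' n : ℤ,
                ENNReal.ofReal ((ξ^2 + (n:ℝ)^2) ^ s) * (‖F₀ (ξ, n)‖₊ : ℝ≥0∞) ^ 2 := by
  refine ⟨4, by norm_num, ?_⟩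
  intro lam hlam N hN m hm F₀ hF
  have hl0 : (0:ℝ) < lam := lt_of_lt_of_le one_pos hlam
  have hN0 : (0:ℝ) < N := lt_of_lt_of_le one_pos hN
  set P : ℝ := 2*(2 - 2/(k:ℝ)) with hP
  have hPnn : (0:ℝ) ≤ lam ^ P := Real.rpow_nonneg hl0.le _
  -- measurable building blocks
  have hcomp : ∀ n : ℤ, Measurable fun ξ : ℝ => ((‖F₀ (ξ, n)‖₊ : ℝ≥0∞) ^ 2) := by
    intro n
    exact ((hF.comp (measurable_id.prodMk measurable_const)).nnnorm.coe_nnreal_ennreal).pow_const 2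
  have hG : Measurable fun ξ : ℝ => ∑' n : ℤ, ((‖F₀ (ξ, n)‖₊ : ℝ≥0∞) ^ 2) :=
    Measurable.ennreal_tsum hcomp
  have hH : Measurable fun ξ : ℝ =>
      ∑' n : ℤ, ENNReal.ofReal ((ξ^2 + (n:ℝ)^2) ^ s) * ((‖F₀ (ξ, n)‖₊ : ℝ≥0∞) ^ 2) := by
    refine Measurable.ennreal_tsum fun n => Measurable.mul ?_ (hcomp n)
    exact (((measurable_id.pow_const 2).add_const ((n:ℝ)^2)).pow measurable_const).ennreal_ofReal
  -- exponent arithmetic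
  have hlne : ∀ a b : ℝ, lam ^ a * lam ^ b = lam ^ (a+b) := fun a b =>
    (Real.rpow_add hl0 a b).symm
  have hinv : (1/lam : ℝ) = lam ^ (-1:ℝ) := by
    rw [Real.rpow_neg_one, one_div]
  constructor
  · -- part (i)
    have hstep : (∫⁻ ξ : ℝ, ∑' n : ℤ,
          ENNReal.ofReal (m (ξ, (n:ℝ)/lam) ^ 2 * lam ^ P)
            * (‖F₀ (lam*ξ, n)‖₊ : ℝ≥0∞) ^ 2)
        ≤ ENNReal.ofReal (lam ^ P) *
            ∫⁻ ξ : ℝ, ∑' n : ℤ, ((‖F₀ (lam*ξ, n)‖₊ : ℝ≥0∞) ^ 2) := by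
      rw [← lintegral_const_mul' _ _ ENNReal.ofReal_ne_top]
      refine lintegral_mono fun ξ => ?_
      rw [← ENNReal.tsum_mul_left]
      refine ENNReal.tsum_le_tsum fun n => mul_le_mul_left ?_ _
      refine ENNReal.ofReal_le_ofReal ?_
      have h1 : m (ξ, (n:ℝ)/lam) ≤ 1 := m_le_one hN0.le hm _
      have h0 : 0 ≤ m (ξ, (n:ℝ)/lam) := (hm.2.1 _).le
      nlinarith [mul_le_mul h1 h1 h0 zero_le_one]
    have hcov : (∫⁻ ξ : ℝ, ∑' n : ℤ, ((‖F₀ (lam*ξ, n)‖₊ : ℝ≥0∞) ^ 2))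
        = ENNReal.ofReal (1/lam) * ∫⁻ ξ : ℝ, ∑' n : ℤ, ((‖F₀ (ξ, n)‖₊ : ℝ≥0∞) ^ 2) :=
      lintegral_scale hl0 hG
    calc ENNReal.ofReal (1/lam) * ∫⁻ ξ : ℝ, ∑' n : ℤ,
          ENNReal.ofReal (m (ξ, (n:ℝ)/lam) ^ 2 * lam ^ P)
            * (‖F₀ (lam*ξ, n)‖₊ : ℝ≥0∞) ^ 2
        ≤ ENNReal.ofReal (1/lam) * (ENNReal.ofReal (lam ^ P) *
            (ENNReal.ofReal (1/lam) * ∫⁻ ξ : ℝ, ∑' n : ℤ, ((‖F₀ (ξ, n)‖₊ : ℝ≥0∞) ^ 2))) := by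
          rw [← hcov]; exact mul_le_mul_right hstep _
      _ = ENNReal.ofReal ((1/lam) * (lam ^ P * (1/lam))) *
            ∫⁻ ξ : ℝ, ∑' n : ℤ, ((‖F₀ (ξ, n)‖₊ : ℝ≥0∞) ^ 2) := by
          rw [ENNReal.ofReal_mul (by positivity), ENNReal.ofReal_mul hPnn, mul_assoc, mul_assoc]
      _ ≤ ENNReal.ofReal (4 * lam ^ (2 - 4/(k:ℝ))) *
            ∫⁻ ξ : ℝ, ∑' n : ℤ, ((‖F₀ (ξ, n)‖₊ : ℝ≥0∞) ^ 2) := by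
          refine mul_le_mul_left (ENNReal.ofReal_le_ofReal ?_) _
          have he : (1/lam) * (lam ^ P * (1/lam)) = lam ^ (2 - 4/(k:ℝ)) := by
            rw [hinv, hlne, hlne]
            congr 1
            rw [hP]; ring
          rw [he]
          nlinarith [Real.rpow_nonneg hl0.le (2 - 4/(k:ℝ))]
  · -- part (ii)
    set c : ℝ := 4 * N ^ (2 - 2*s) * lam ^ (-(2*s)) * lam ^ P with hc
    have hc0 : 0 ≤ c := by positivity
    have hpt : ∀ (ξ : ℝ) (n : ℤ),
        m (ξ, (n:ℝ)/lam) ^ 2 * (ξ^2 + ((n:ℝ)/lam)^2) * lam ^ P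
          ≤ c * (((lam*ξ)^2 + (n:ℝ)^2) ^ s) := by
      intro ξ n
      have hkey := key_ptwise hs0 hs1 hN hm (ξ, (n:ℝ)/lam)
      simp only at hkey
      have hfac : ((lam*ξ)^2 + (n:ℝ)^2) = lam^2 * (ξ^2 + ((n:ℝ)/lam)^2) := by
        field_simp
      have hX : (0:ℝ) ≤ ξ^2 + ((n:ℝ)/lam)^2 := by positivity
      have hfs : (((lam*ξ)^2 + (n:ℝ)^2) : ℝ) ^ s
          = lam ^ (2*s) * (ξ^2 + ((n:ℝ)/lam)^2) ^ s := by
        rw [hfac, Real.mul_rpow (sq_nonneg lam) hX, ← Real.rpow_natCast lam 2,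
          ← Real.rpow_mul hl0.le]
        norm_num
      have hls : lam ^ (-(2*s)) * lam ^ (2*s) = 1 := by
        rw [hlne]; norm_num
      have : m (ξ, (n:ℝ)/lam) ^ 2 * (ξ^2 + ((n:ℝ)/lam)^2)
          ≤ 4 * N ^ (2-2*s) * (ξ^2 + ((n:ℝ)/lam)^2) ^ s := hkey
      calc m (ξ, (n:ℝ)/lam) ^ 2 * (ξ^2 + ((n:ℝ)/lam)^2) * lam ^ P
          ≤ (4 * N ^ (2-2*s) * (ξ^2 + ((n:ℝ)/lam)^2) ^ s) * lam ^ P :=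
            mul_le_mul_of_nonneg_right this hPnn
        _ = c * (((lam*ξ)^2 + (n:ℝ)^2) ^ s) := by
            rw [hfs, hc]
            rw [show (4 * N ^ (2-2*s) * lam ^ (-(2*s)) * lam ^ P) *
              (lam ^ (2*s) * (ξ^2 + ((n:ℝ)/lam)^2) ^ s) =
              (lam ^ (-(2*s)) * lam ^ (2*s)) *
              (4 * N ^ (2-2*s) * (ξ^2 + ((n:ℝ)/lam)^2) ^ s * lam ^ P) by ring, hls]
            ring
    have hstep : (∫⁻ ξ : ℝ, ∑' n : ℤ,
          ENNReal.ofReal (m (ξ, (n:ℝ)/lam) ^ 2 * (ξ^2 + ((n:ℝ)/lam)^2) * lam ^ P)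
            * (‖F₀ (lam*ξ, n)‖₊ : ℝ≥0∞) ^ 2)
        ≤ ENNReal.ofReal c *
            ∫⁻ ξ : ℝ, ∑' n : ℤ,
              ENNReal.ofReal ((((lam*ξ))^2 + (n:ℝ)^2) ^ s) * ((‖F₀ (lam*ξ, n)‖₊ : ℝ≥0∞) ^ 2) := by
      rw [← lintegral_const_mul' _ _ ENNReal.ofReal_ne_top]
      refine lintegral_mono fun ξ => ?_
      rw [← ENNReal.tsum_mul_left]
      refine ENNReal.tsum_le_tsum fun n => ?_
      rw [← mul_assoc, ← ENNReal.ofReal_mul hc0]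
      exact mul_le_mul_left (ENNReal.ofReal_le_ofReal (hpt ξ n)) _
    have hcov : (∫⁻ ξ : ℝ, ∑' n : ℤ,
          ENNReal.ofReal ((((lam*ξ))^2 + (n:ℝ)^2) ^ s) * ((‖F₀ (lam*ξ, n)‖₊ : ℝ≥0∞) ^ 2))
        = ENNReal.ofReal (1/lam) * ∫⁻ ξ : ℝ, ∑' n : ℤ,
            ENNReal.ofReal ((ξ^2 + (n:ℝ)^2) ^ s) * ((‖F₀ (ξ, n)‖₊ : ℝ≥0∞) ^ 2) :=
      lintegral_scale hl0 hH
    calc ENNReal.ofReal (1/lam) * ∫⁻ ξ : ℝ, ∑' n : ℤ,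
          ENNReal.ofReal (m (ξ, (n:ℝ)/lam) ^ 2 * (ξ^2 + ((n:ℝ)/lam)^2) * lam ^ P)
            * (‖F₀ (lam*ξ, n)‖₊ : ℝ≥0∞) ^ 2
        ≤ ENNReal.ofReal (1/lam) * (ENNReal.ofReal c *
            (ENNReal.ofReal (1/lam) * ∫⁻ ξ : ℝ, ∑' n : ℤ,
              ENNReal.ofReal ((ξ^2 + (n:ℝ)^2) ^ s) * ((‖F₀ (ξ, n)‖₊ : ℝ≥0∞) ^ 2))) := by
          rw [← hcov]; exact mul_le_mul_right hstep _
      _ = (ENNReal.ofReal (1/lam) * ENNReal.ofReal c * ENNReal.ofReal (1/lam)) *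
            ∫⁻ ξ : ℝ, ∑' n : ℤ,
              ENNReal.ofReal ((ξ^2 + (n:ℝ)^2) ^ s) * ((‖F₀ (ξ, n)‖₊ : ℝ≥0∞) ^ 2) := by
          ring
      _ = ENNReal.ofReal ((1/lam) * c * (1/lam)) *
            ∫⁻ ξ : ℝ, ∑' n : ℤ,
              ENNReal.ofReal ((ξ^2 + (n:ℝ)^2) ^ s) * ((‖F₀ (ξ, n)‖₊ : ℝ≥0∞) ^ 2) := by
          rw [← ENNReal.ofReal_mul (by positivity : (0:ℝ) ≤ 1/lam),
            ← ENNReal.ofReal_mul (mul_nonneg (by positivity) hc0)]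
      _ ≤ ENNReal.ofReal (4 * N ^ (2 - 2*s) * lam ^ (2 - 4/(k:ℝ) - 2*s)) *
            ∫⁻ ξ : ℝ, ∑' n : ℤ,
              ENNReal.ofReal ((ξ^2 + (n:ℝ)^2) ^ s) * ((‖F₀ (ξ, n)‖₊ : ℝ≥0∞) ^ 2) := by
          refine mul_le_mul_left (ENNReal.ofReal_le_ofReal (le_of_eq ?_)) _
          rw [hc, hinv]
          rw [show lam ^ (-1:ℝ) * (4 * N ^ (2-2*s) * lam ^ (-(2*s)) * lam ^ P) * lam ^ (-1:ℝ)
            = 4 * N ^ (2-2*s) * (lam ^ (-1:ℝ) * lam ^ (-(2*s)) * lam ^ P * lam ^ (-1:ℝ)) by ring]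
          rw [hlne, hlne, hlne]
          congr 1
          rw [hP]; ring

end
end
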